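/- arXiv:2109.11105 — 4 statements merged into one kernel-verified Lean document; each statement's English description precedes it below -/
import Mathlib

section
/- Let X and Y be random variables on a probability space with joint law P_{XY} and marginal laws P_X, P_Y. For every measurable critic function f : 𝒳 × 𝒴 → ℝ and every measurable function a : 𝒴 → ℝ with a(y) > 0 for all y, if (x,y) ↦ f(x,y) − log a(y) is P_{XY}-integrable and (x,y) ↦ e^{f(x,y)}/a(y) is (P_X ⊗ P_Y)-integrable, then the mutual information satisfies the TUBA lower bound I(X;Y) ≥ E_{P_{XY}}[f(X,Y) − log a(Y)] − E_{P_X ⊗ P_Y}[e^{f(x,y)}/a(y)]. -/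
open MeasureTheory Real

open Classical in
/-- Kullback–Leibler divergence between two measures, valued in the extended reals:
it is the integral of the log-likelihood ratio when `μ ≪ ν` and the log-likelihood
ratio is `μ`-integrable, and `⊤` otherwise. -/
noncomputable def klDiv {α : Type*} [MeasurableSpace α] (μ ν : Measure α) : EReal :=
  if μ ≪ ν ∧ Integrable (llr μ ν) μ then ((∫ x, llr μ ν x ∂μ : ℝ) : EReal) else ⊤

/-- Mutual information between random variables `X` and `Y` on a probability space
`(Ω, P)`: the KL divergence between the joint law of `(X, Y)` and the product of the
marginal laws of `X` and `Y`. -/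
noncomputable def mutualInfo {Ω 𝒳 𝒴 : Type*} [MeasurableSpace Ω] [MeasurableSpace 𝒳]
    [MeasurableSpace 𝒴] (P : Measure Ω) (X : Ω → 𝒳) (Y : Ω → 𝒴) : EReal :=
  klDiv (P.map (fun ω => (X ω, Y ω))) ((P.map X).prod (P.map Y))

/-!
Donsker–Varadhan: tilting `ν` by `exp g` and applying Gibbs' inequality to `μ` against the
tilted measure gives `∫ g dμ - log ∫ exp g dν ≤ KL(μ ‖ ν)`; since `log z ≤ z - 1`, the
log-partition function may be replaced by `∫ exp g dν - 1`. The TUBA bound is this with the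
critic `g = f - log a`, for which `exp g = exp f / a`.
-/

section VariationalBounds

variable {α : Type*} [MeasurableSpace α] {μ ν : Measure α}
  [IsProbabilityMeasure μ] [IsProbabilityMeasure ν]

theorem integral_llr_nonneg (hμν : μ ≪ ν) (h_int : Integrable (llr μ ν) μ) :
    0 ≤ ∫ x, llr μ ν x ∂μ := by
  simpa using InformationTheory.integral_llr_add_sub_measure_univ_nonneg hμν h_int

theorem integral_sub_log_integral_exp_le_integral_llr (hμν : μ ≪ ν)
    (h_int : Integrable (llr μ ν) μ) {g : α → ℝ} (hgμ : Integrable g μ)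
    (hgν : Integrable (fun x ↦ exp (g x)) ν) :
    ∫ x, g x ∂μ - log (∫ x, exp (g x) ∂ν) ≤ ∫ x, llr μ ν x ∂μ := by
  have : IsProbabilityMeasure (ν.tilted g) := isProbabilityMeasure_tilted hgν
  have h_gibbs := integral_llr_nonneg (hμν.trans (absolutelyContinuous_tilted hgν))
    (integrable_llr_tilted_right hμν hgμ h_int hgν)
  rw [integral_llr_tilted_right hμν hgμ hgν h_int] at h_gibbs
  linarith

theorem integral_sub_integral_exp_add_one_le_integral_llr (hμν : μ ≪ ν)
    (h_int : Integrable (llr μ ν) μ) {g : α → ℝ} (hgμ : Integrable g μ)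
    (hgν : Integrable (fun x ↦ exp (g x)) ν) :
    ∫ x, g x ∂μ - ∫ x, exp (g x) ∂ν + 1 ≤ ∫ x, llr μ ν x ∂μ := by
  have h_log := log_le_sub_one_of_pos (integral_exp_pos hgν)
  linarith [integral_sub_log_integral_exp_le_integral_llr hμν h_int hgμ hgν]

theorem integral_sub_integral_exp_le_klDiv {g : α → ℝ} (hgμ : Integrable g μ)
    (hgν : Integrable (fun x ↦ exp (g x)) ν) :
    ((∫ x, g x ∂μ - ∫ x, exp (g x) ∂ν : ℝ) : EReal) ≤ klDiv μ ν := by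
  rw [klDiv]
  split_ifs with h
  · exact EReal.coe_le_coe_iff.mpr <| by
      linarith [integral_sub_integral_exp_add_one_le_integral_llr h.1 h.2 hgμ hgν]
  · exact le_top

end VariationalBounds

theorem mutualInfo_ge_tuba_general {Ω 𝒳 𝒴 : Type*} [MeasurableSpace Ω] [MeasurableSpace 𝒳]
    [MeasurableSpace 𝒴] (P : Measure Ω) [IsProbabilityMeasure P]
    (X : Ω → 𝒳) (Y : Ω → 𝒴) (hX : Measurable X) (hY : Measurable Y)
    (f : 𝒳 × 𝒴 → ℝ)
    (a : 𝒴 → ℝ) (ha_pos : ∀ y, 0 < a y)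
    (h_int₁ : Integrable (fun p => f p - Real.log (a p.2))
      (P.map (fun ω => (X ω, Y ω))))
    (h_int₂ : Integrable (fun p => Real.exp (f p) / a p.2)
      ((P.map X).prod (P.map Y))) :
    ((∫ p, (f p - Real.log (a p.2)) ∂(P.map (fun ω => (X ω, Y ω)))
        - ∫ p, Real.exp (f p) / a p.2 ∂((P.map X).prod (P.map Y)) : ℝ) : EReal)
      ≤ mutualInfo P X Y := by
  have : IsProbabilityMeasure (P.map fun ω ↦ (X ω, Y ω)) :=
    Measure.isProbabilityMeasure_map (hX.prodMk hY).aemeasurable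
  have : IsProbabilityMeasure (P.map X) := Measure.isProbabilityMeasure_map hX.aemeasurable
  have : IsProbabilityMeasure (P.map Y) := Measure.isProbabilityMeasure_map hY.aemeasurable
  have h_exp : (fun p : 𝒳 × 𝒴 ↦ exp (f p - log (a p.2))) = fun p ↦ exp (f p) / a p.2 := by
    ext p
    rw [exp_sub, exp_log (ha_pos p.2)]
  have h_bound := integral_sub_integral_exp_le_klDiv h_int₁ (h_exp ▸ h_int₂)
  rwa [h_exp] at h_bound

/-- **TUBA lower bound on mutual information.** For every measurable critic
`f : 𝒳 × 𝒴 → ℝ` and every measurable `a : 𝒴 → ℝ` with `a y > 0` for all `y`, if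
`(x,y) ↦ f (x,y) - log (a y)` is integrable w.r.t. the joint law `P_{XY}` and
`(x,y) ↦ exp (f (x,y)) / a y` is integrable w.r.t. the product of the marginals
`P_X ⊗ P_Y`, then
`I(X;Y) ≥ E_{P_{XY}}[f(X,Y) - log a(Y)] - E_{P_X ⊗ P_Y}[e^{f(x,y)} / a(y)]`. -/
theorem mutualInfo_ge_tuba {Ω 𝒳 𝒴 : Type*} [MeasurableSpace Ω] [MeasurableSpace 𝒳]
    [MeasurableSpace 𝒴] (P : Measure Ω) [IsProbabilityMeasure P]
    (X : Ω → 𝒳) (Y : Ω → 𝒴) (hX : Measurable X) (hY : Measurable Y)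
    (f : 𝒳 × 𝒴 → ℝ) (hf : Measurable f)
    (a : 𝒴 → ℝ) (ha : Measurable a) (ha_pos : ∀ y, 0 < a y)
    (h_int₁ : Integrable (fun p => f p - Real.log (a p.2))
      (P.map (fun ω => (X ω, Y ω))))
    (h_int₂ : Integrable (fun p => Real.exp (f p) / a p.2)
      ((P.map X).prod (P.map Y))) :
    ((∫ p, (f p - Real.log (a p.2)) ∂(P.map (fun ω => (X ω, Y ω)))
        - ∫ p, Real.exp (f p) / a p.2 ∂((P.map X).prod (P.map Y)) : ℝ) : EReal)
      ≤ mutualInfo P X Y :=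
  mutualInfo_ge_tuba_general P X Y hX hY f a ha_pos h_int₁ h_int₂
end

section
/- Let 𝒳 and 𝒴 be countable sets and let X, Y be random variables taking values in 𝒳 and 𝒴 with joint probability mass function p(x,y) and marginals p(x), p(y). Let q(·|y) be, for each y ∈ 𝒴 with p(y) > 0, a probability mass function on 𝒳 with q(x|y) > 0 whenever p(x,y) > 0. If the Shannon entropy H(X) and the sum Σ_{x,y} p(x,y) log q(x|y) are finite, then the Barber–Agakov bound holds: I(X;Y) ≥ Σ_{x,y} p(x,y) log q(x|y) + H(X). -/
open scoped BigOperators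

open Classical in
/-- Discrete mutual information between random variables with joint pmf `p` and
marginal pmfs `pX`, `pY`, valued in the extended reals: the sum
`Σ_{x,y} p(x,y) log (p(x,y) / (pX x * pY y))` when this sum converges (absolutely),
and `⊤` otherwise.  This is the KL divergence between the joint law and the product
of the marginal laws. -/
noncomputable def discreteMI {𝒳 𝒴 : Type*} (p : 𝒳 × 𝒴 → ℝ) (pX : 𝒳 → ℝ) (pY : 𝒴 → ℝ) :
    EReal :=
  if Summable (fun xy : 𝒳 × 𝒴 => p xy * Real.log (p xy / (pX xy.1 * pY xy.2))) then
    ((∑' xy : 𝒳 × 𝒴, p xy * Real.log (p xy / (pX xy.1 * pY xy.2)) : ℝ) : EReal)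
  else ⊤

set_option maxHeartbeats 2000000 in
/-- **Barber–Agakov lower bound on mutual information.** For discrete random
variables with joint pmf `p` and marginals `pX`, `pY`, and a family `q(·|y)` of
pmfs on `𝒳` with `q(x|y) > 0` whenever `p(x,y) > 0`, if the Shannon entropy
`H(X) = -Σ_x pX x log (pX x)` and the sum `Σ_{x,y} p(x,y) log q(x|y)` are finite
(absolutely convergent), then `I(X;Y) ≥ Σ_{x,y} p(x,y) log q(x|y) + H(X)`. -/
theorem mutualInfo_ge_barber_agakov {𝒳 𝒴 : Type*} [Countable 𝒳] [Countable 𝒴]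
    (p : 𝒳 × 𝒴 → ℝ) (pX : 𝒳 → ℝ) (pY : 𝒴 → ℝ) (q : 𝒴 → 𝒳 → ℝ)
    (hp0 : ∀ xy, 0 ≤ p xy) (hp1 : ∑' xy : 𝒳 × 𝒴, p xy = 1)
    (hpX : ∀ x, pX x = ∑' y, p (x, y)) (hpY : ∀ y, pY y = ∑' x, p (x, y))
    (hq_pmf : ∀ y, 0 < pY y → (∀ x, 0 ≤ q y x) ∧ (∑' x, q y x) = 1)
    (hq_pos : ∀ x y, 0 < p (x, y) → 0 < q y x)
    -- the Shannon entropy `H(X)` is finite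
    (hH : Summable (fun x => |pX x * Real.log (pX x)|))
    -- the sum `Σ_{x,y} p(x,y) log q(x|y)` is finite
    (hq_sum : Summable (fun xy : 𝒳 × 𝒴 => |p xy * Real.log (q xy.2 xy.1)|)) :
    (((∑' xy : 𝒳 × 𝒴, p xy * Real.log (q xy.2 xy.1))
        + (-∑' x : 𝒳, pX x * Real.log (pX x)) : ℝ) : EReal)
      ≤ discreteMI p pX pY := by
  classical
  -- p is summable
  have hp_summ : Summable p := by
    by_contra h
    rw [tsum_eq_zero_of_not_summable h] at hp1; norm_num at hp1
  have hp_sw : Summable (fun yx : 𝒴 × 𝒳 => p (yx.2, yx.1)) := by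
    have := hp_summ.prod_symm
    simpa [Prod.swap] using this
  have hslice_x : ∀ x, Summable (fun y => p (x, y)) :=
    ((summable_prod_of_nonneg (fun xy => hp0 xy)).mp hp_summ).1
  have hslice_y : ∀ y, Summable (fun x => p (x, y)) := by
    intro y
    exact ((summable_prod_of_nonneg (fun yx : 𝒴 × 𝒳 => hp0 _)).mp hp_sw).1 y
  have hpX0 : ∀ x, 0 ≤ pX x := by
    intro x; rw [hpX]; exact tsum_nonneg fun y => hp0 _
  have hpY0 : ∀ y, 0 ≤ pY y := by
    intro y; rw [hpY]; exact tsum_nonneg fun x => hp0 _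
  have hpX_pos : ∀ x y, 0 < p (x, y) → 0 < pX x := by
    intro x y h
    rw [hpX]
    exact lt_of_lt_of_le h (Summable.le_tsum (hslice_x x) y fun z _ => hp0 _)
  have hpY_pos : ∀ x y, 0 < p (x, y) → 0 < pY y := by
    intro x y h
    rw [hpY]
    exact lt_of_lt_of_le h (Summable.le_tsum (hslice_y y) x fun z _ => hp0 _)
  -- summability of pY
  have hpY_summ : Summable pY := by
    have h2 := ((summable_prod_of_nonneg (fun yx : 𝒴 × 𝒳 => hp0 _)).mp hp_sw).2
    have : (fun y => ∑' x, p (x, y)) = pY := by funext y; rw [hpY]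
    rwa [this] at h2
  have hpY_sum1 : ∑' y, pY y = 1 := by
    have := Summable.tsum_prod' hp_sw (fun y => hslice_y y)
    rw [← (Equiv.prodComm 𝒴 𝒳).tsum_eq p] at hp1
    simp only [Equiv.prodComm_apply] at hp1
    have heq : ∑' (yx : 𝒴 × 𝒳), p (yx.2, yx.1) = 1 := by
      rw [← hp1]; rfl
    rw [this] at heq
    rw [← heq]
    congr 1
    funext y
    rw [hpY]
  -- summability of p * log pX over pairs
  have hplogpX_abs : Summable (fun xy : 𝒳 × 𝒴 => |p xy * Real.log (pX xy.1)|) := by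
    rw [summable_prod_of_nonneg (fun xy => abs_nonneg _)]
    constructor
    · intro x
      have : (fun y => |p (x, y) * Real.log (pX x)|)
          = fun y => |Real.log (pX x)| * p (x, y) := by
        funext y
        rw [abs_mul, abs_of_nonneg (hp0 _), mul_comm]
      rw [this]
      exact (hslice_x x).mul_left _
    · have : (fun x => ∑' y, |p (x, y) * Real.log (pX x)|)
          = fun x => |pX x * Real.log (pX x)| := by
        funext x
        have h1 : (fun y => |p (x, y) * Real.log (pX x)|)
            = fun y => |Real.log (pX x)| * p (x, y) := by
          funext y; rw [abs_mul, abs_of_nonneg (hp0 _), mul_comm]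
        rw [h1, tsum_mul_left, ← hpX x, abs_mul, abs_of_nonneg (hpX0 x), mul_comm]
      rw [this]
      exact hH
  have hplogpX : Summable (fun xy : 𝒳 × 𝒴 => p xy * Real.log (pX xy.1)) :=
    hplogpX_abs.of_abs
  have hq' : Summable (fun xy : 𝒳 × 𝒴 => p xy * Real.log (q xy.2 xy.1)) :=
    hq_sum.of_abs
  -- tsum of p * log pX over pairs equals Σ_x pX x * log pX x
  have hT : ∑' xy : 𝒳 × 𝒴, p xy * Real.log (pX xy.1)
      = ∑' x, pX x * Real.log (pX x) := by
    rw [Summable.tsum_prod' hplogpX (fun x => (hplogpX_abs.of_abs.prod_factor x))]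
    congr 1
    funext x
    have : (fun y => p (x, y) * Real.log (pX x))
        = fun y => Real.log (pX x) * p (x, y) := by
      funext y; ring
    rw [this, tsum_mul_left, ← hpX x, mul_comm]
  -- the comparison measure r
  set r : 𝒳 × 𝒴 → ℝ := fun xy => pY xy.2 * q xy.2 xy.1 with hr_def
  have hr0 : ∀ xy, 0 ≤ r xy := by
    intro ⟨x, y⟩
    rcases eq_or_lt_of_le (hpY0 y) with h | h
    · simp [hr_def, ← h]
    · exact mul_nonneg (hpY0 y) ((hq_pmf y h).1 x)
  have hr_sw : ∀ y, (fun x => r (x, y)) = fun x => pY y * q y x := by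
    intro y; rfl
  have hr_slice : ∀ y, Summable (fun x => r (x, y)) := by
    intro y
    rcases eq_or_lt_of_le (hpY0 y) with h | h
    · have : (fun x => r (x, y)) = fun _ => (0 : ℝ) := by
        funext x; simp [hr_def, ← h]
      rw [this]; exact summable_zero
    · have hqy : Summable (q y) := by
        by_contra hc
        have := tsum_eq_zero_of_not_summable hc
        rw [(hq_pmf y h).2] at this; norm_num at this
      rw [hr_sw y]
      exact hqy.mul_left _
  have hr_slice_sum : ∀ y, ∑' x, r (x, y) = pY y := by
    intro y
    rw [hr_sw, tsum_mul_left]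
    rcases eq_or_lt_of_le (hpY0 y) with h | h
    · rw [← h, zero_mul]
    · rw [(hq_pmf y h).2, mul_one]
  have hr_summ : Summable r := by
    have hsw : Summable (fun yx : 𝒴 × 𝒳 => r (yx.2, yx.1)) := by
      rw [summable_prod_of_nonneg (fun yx : 𝒴 × 𝒳 => hr0 _)]
      constructor
      · intro y; exact hr_slice y
      · have : (fun y => ∑' x, r (x, y)) = pY := by
          funext y; exact hr_slice_sum y
        rw [this]; exact hpY_summ
    have := hsw.prod_symm
    simpa [Prod.swap] using this
  have hr_sum1 : ∑' xy : 𝒳 × 𝒴, r xy = 1 := by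
    have hsw : Summable (fun yx : 𝒴 × 𝒳 => r (yx.2, yx.1)) := by
      have := hr_summ.prod_symm
      simpa [Prod.swap] using this
    rw [← (Equiv.prodComm 𝒴 𝒳).tsum_eq r]
    simp only [Equiv.prodComm_apply]
    have : ∑' yx : 𝒴 × 𝒳, r (yx.2, yx.1) = ∑' y, ∑' x, r (x, y) := Summable.tsum_prod' hsw (fun y => hr_slice y)
    calc ∑' yx : 𝒴 × 𝒳, r yx.swap = ∑' yx : 𝒴 × 𝒳, r (yx.2, yx.1) := rfl
      _ = ∑' y, ∑' x, r (x, y) := this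
      _ = ∑' y, pY y := by congr 1; funext y; exact hr_slice_sum y
      _ = 1 := hpY_sum1
  -- split into cases on summability of the MI integrand
  rw [discreteMI]
  split_ifs with hS
  · -- main case
    rw [EReal.coe_le_coe_iff]
    set Sterm : 𝒳 × 𝒴 → ℝ := fun xy => p xy * Real.log (p xy / (pX xy.1 * pY xy.2))
      with hSt_def
    set f : 𝒳 × 𝒴 → ℝ := fun xy => p xy * Real.log (p xy / r xy) with hf_def
    have hpointwise : ∀ xy, f xy = Sterm xy + p xy * Real.log (pX xy.1)
        - p xy * Real.log (q xy.2 xy.1) := by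
      intro ⟨x, y⟩
      rcases eq_or_lt_of_le (hp0 (x, y)) with h | h
      · simp [hf_def, hSt_def, ← h]
      · have hx := hpX_pos x y h
        have hy := hpY_pos x y h
        have hqxy := hq_pos x y h
        simp only [hf_def, hSt_def, hr_def]
        rw [Real.log_div (ne_of_gt h) (by positivity),
            Real.log_div (ne_of_gt h) (by positivity),
            Real.log_mul (ne_of_gt hy) (ne_of_gt hqxy),
            Real.log_mul (ne_of_gt hx) (ne_of_gt hy)]
        ring
    have hf_summ : Summable f := by
      have : f = fun xy => (Sterm xy + p xy * Real.log (pX xy.1))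
          - p xy * Real.log (q xy.2 xy.1) := by
        funext xy; rw [hpointwise xy]
      rw [this]
      exact (hS.add hplogpX).sub hq'
    have hf_tsum : ∑' xy, f xy = (∑' xy, Sterm xy)
        + (∑' xy : 𝒳 × 𝒴, p xy * Real.log (pX xy.1))
        - (∑' xy : 𝒳 × 𝒴, p xy * Real.log (q xy.2 xy.1)) := by
      have h1 : f = fun xy => (Sterm xy + p xy * Real.log (pX xy.1))
          - p xy * Real.log (q xy.2 xy.1) := by
        funext xy; rw [hpointwise xy]
      rw [h1, Summable.tsum_sub (hS.add hplogpX) hq', Summable.tsum_add hS hplogpX]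
    -- the key nonnegativity: 0 ≤ ∑' f
    have hkey : (0 : ℝ) ≤ ∑' xy, f xy := by
      have hle : ∀ xy, p xy - r xy ≤ f xy := by
        intro ⟨x, y⟩
        rcases eq_or_lt_of_le (hp0 (x, y)) with h | h
        · have : f (x, y) = 0 := by simp [hf_def, ← h]
          rw [this, ← h]
          simpa using hr0 (x, y)
        · have hy := hpY_pos x y h
          have hqxy := hq_pos x y h
          have hrpos : 0 < r (x, y) := mul_pos hy hqxy
          have hlog : Real.log (r (x, y) / p (x, y)) ≤ r (x, y) / p (x, y) - 1 :=
            Real.log_le_sub_one_of_pos (by positivity)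
          have hlog2 : 1 - r (x, y) / p (x, y) ≤ Real.log (p (x, y) / r (x, y)) := by
            rw [Real.log_div (ne_of_gt h) (ne_of_gt hrpos)]
            rw [Real.log_div (ne_of_gt hrpos) (ne_of_gt h)] at hlog
            linarith
          have := mul_le_mul_of_nonneg_left hlog2 (le_of_lt h)
          have heq : p (x, y) * (1 - r (x, y) / p (x, y)) = p (x, y) - r (x, y) := by
            field_simp
          rw [heq] at this
          exact this
      have hsum_pr : Summable (fun xy => p xy - r xy) := hp_summ.sub hr_summ
      have := Summable.tsum_le_tsum hle hsum_pr hf_summ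
      rw [Summable.tsum_sub hp_summ hr_summ, hp1, hr_sum1] at this
      simpa using this
    rw [hf_tsum, hT] at hkey
    linarith
  · exact le_top
end

section
/- Let 𝒳 and 𝒴 be countable sets and let X, Y be random variables taking values in 𝒳 and 𝒴 with joint probability mass function p(x,y) and marginals p(x), p(y). Let f : 𝒳 × 𝒴 → ℝ be any function such that the partition function Z(y) = Σ_x p(x) e^{f(x,y)} is finite for every y with p(y) > 0, and such that Σ_{x,y} p(x,y) |f(x,y)| and Σ_y p(y) |log Z(y)| are finite. Then the mutual information satisfies the unnormalized lower bound I(X;Y) ≥ Σ_{x,y} p(x,y) f(x,y) − Σ_y p(y) log Z(y). -/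
open scoped BigOperators

set_option maxHeartbeats 1000000

lemma tsum_swap_eq {𝒳 𝒴 : Type*} (f : 𝒳 × 𝒴 → ℝ) (h : Summable f) :
    ∑' xy : 𝒳 × 𝒴, f xy = ∑' y, ∑' x, f (x, y) := by
  rw [← (Equiv.prodComm 𝒴 𝒳).tsum_eq f]
  exact Summable.tsum_prod h.prod_symm

lemma summable_swap_iff {𝒳 𝒴 : Type*} {f : 𝒳 × 𝒴 → ℝ} (hf : ∀ xy, 0 ≤ f xy) :
    Summable f ↔ (∀ y, Summable fun x => f (x, y)) ∧ Summable fun y => ∑' x, f (x, y) := by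
  rw [← (Equiv.prodComm 𝒴 𝒳).summable_iff (f := f)]
  exact summable_prod_of_nonneg (fun q => hf _)

/-- **Unnormalized (energy-based) lower bound on mutual information.** For discrete
random variables with joint pmf `p` and marginals `pX`, `pY`, and any critic
`f : 𝒳 × 𝒴 → ℝ` such that the partition function `Z y = Σ_x pX x * e^{f(x,y)}` is
finite for every `y` with `pY y > 0`, and such that `Σ_{x,y} p(x,y) |f(x,y)|` and
`Σ_y pY y * |log Z(y)|` are finite, we have
`I(X;Y) ≥ Σ_{x,y} p(x,y) f(x,y) - Σ_y pY y * log Z(y)`. -/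
theorem mutualInfo_ge_unnormalized_bound {𝒳 𝒴 : Type*} [Countable 𝒳] [Countable 𝒴]
    (p : 𝒳 × 𝒴 → ℝ) (pX : 𝒳 → ℝ) (pY : 𝒴 → ℝ) (f : 𝒳 × 𝒴 → ℝ) (Z : 𝒴 → ℝ)
    (hp0 : ∀ xy, 0 ≤ p xy) (hp1 : ∑' xy : 𝒳 × 𝒴, p xy = 1)
    (hpX : ∀ x, pX x = ∑' y, p (x, y)) (hpY : ∀ y, pY y = ∑' x, p (x, y))
    (hZ : ∀ y, Z y = ∑' x, pX x * Real.exp (f (x, y)))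
    -- the partition function is finite for every `y` with `pY y > 0`
    (hZ_fin : ∀ y, 0 < pY y → Summable (fun x => pX x * Real.exp (f (x, y))))
    (hf_sum : Summable (fun xy : 𝒳 × 𝒴 => p xy * |f xy|))
    (hZ_sum : Summable (fun y => pY y * |Real.log (Z y)|)) :
    (((∑' xy : 𝒳 × 𝒴, p xy * f xy) - ∑' y : 𝒴, pY y * Real.log (Z y) : ℝ) : EReal)
      ≤ discreteMI p pX pY := by
  classical
  have hps : Summable p := by
    by_contra h
    rw [tsum_eq_zero_of_not_summable h] at hp1; norm_num at hp1
  have hpsy : ∀ y, Summable fun x => p (x, y) := ((summable_swap_iff hp0).mp hps).1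
  have hpX0 : ∀ x, 0 ≤ pX x := fun x => (hpX x) ▸ tsum_nonneg (fun y => hp0 _)
  have hpY0 : ∀ y, 0 ≤ pY y := fun y => (hpY y) ▸ tsum_nonneg (fun x => hp0 _)
  have hZ0 : ∀ y, 0 ≤ Z y := fun y =>
    (hZ y) ▸ tsum_nonneg (fun x => mul_nonneg (hpX0 x) (Real.exp_pos _).le)
  -- positivity transfer
  have hposX : ∀ x y, 0 < p (x, y) → 0 < pX x := by
    intro x y h
    have := Summable.le_tsum (hps.prod_factor x) y (fun j _ => hp0 _)
    rw [← hpX x] at this; linarith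
  have hposY : ∀ x y, 0 < p (x, y) → 0 < pY y := by
    intro x y h
    have := Summable.le_tsum (hpsy y) x (fun j _ => hp0 _)
    rw [← hpY y] at this; linarith
  have hposZ : ∀ x y, 0 < p (x, y) → 0 < Z y := by
    intro x y h
    have h1 : 0 < pX x * Real.exp (f (x, y)) :=
      mul_pos (hposX x y h) (Real.exp_pos _)
    have := Summable.le_tsum (hZ_fin y (hposY x y h)) x
      (fun j _ => mul_nonneg (hpX0 j) (Real.exp_pos _).le)
    rw [← hZ y] at this; linarith
  -- the variational distribution q
  let q : 𝒳 × 𝒴 → ℝ := fun xy => pY xy.2 / Z xy.2 * (pX xy.1 * Real.exp (f xy))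
  have hqdef : ∀ x y, q (x, y) = pY y / Z y * (pX x * Real.exp (f (x, y))) :=
    fun x y => rfl
  have hq0 : ∀ xy, 0 ≤ q xy := fun xy =>
    mul_nonneg (div_nonneg (hpY0 _) (hZ0 _)) (mul_nonneg (hpX0 _) (Real.exp_pos _).le)
  have hqfib : ∀ y, Summable fun x => q (x, y) := by
    intro y
    rcases lt_or_eq_of_le (hpY0 y) with h | h
    · exact ((hZ_fin y h).mul_left (pY y / Z y)).congr (fun x => (hqdef x y).symm)
    · exact summable_zero.congr (fun x => by rw [hqdef, ← h]; ring)
  have hqfibsum : ∀ y, ∑' x, q (x, y) = pY y := by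
    intro y
    rcases lt_or_eq_of_le (hpY0 y) with h | h
    · have hZpos : 0 < Z y := by
        obtain ⟨x, hx⟩ : ∃ x, 0 < p (x, y) := by
          by_contra hc
          push_neg at hc
          have : ∀ x, p (x, y) = 0 := fun x => le_antisymm (hc x) (hp0 _)
          rw [hpY y] at h; simp [this] at h
        exact hposZ x y hx
      rw [tsum_congr (fun x => hqdef x y), tsum_mul_left, ← hZ y]
      field_simp
    · rw [tsum_congr (fun x => by rw [hqdef x y, ← h]; ring : ∀ x, q (x, y) = 0),
        tsum_zero, ← h]
  have hpYsum : Summable pY := by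
    have := ((summable_swap_iff hp0).mp hps).2
    simpa [← hpY] using this
  have hqs : Summable q := by
    refine (summable_swap_iff hq0).mpr ⟨hqfib, ?_⟩
    apply hpYsum.congr
    intro y
    exact (hqfibsum y).symm
  have hqsum1 : ∑' xy, q xy = 1 := by
    rw [tsum_swap_eq q hqs]
    simp only [hqfibsum]
    rw [← hp1, tsum_swap_eq p hps]
    simp [← hpY]
  -- summability of p·f and p·logZ and their tsum values
  have hpf : Summable fun xy => p xy * f xy := by
    apply Summable.of_abs
    apply hf_sum.congr
    intro xy; rw [abs_mul, abs_of_nonneg (hp0 xy)]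
  have hplZ_abs : Summable fun xy : 𝒳 × 𝒴 => p xy * |Real.log (Z xy.2)| := by
    refine (summable_swap_iff (f := fun xy : 𝒳 × 𝒴 => p xy * |Real.log (Z xy.2)|)
      (fun xy => mul_nonneg (hp0 _) (abs_nonneg _))).mpr
      ⟨fun y => ((hpsy y).mul_right (|Real.log (Z y)|)).congr (fun x => rfl), ?_⟩
    apply hZ_sum.congr
    intro y
    rw [hpY y, ← tsum_mul_right]
  have hplZ : Summable fun xy : 𝒳 × 𝒴 => p xy * Real.log (Z xy.2) := by
    apply Summable.of_abs
    apply hplZ_abs.congr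
    intro xy; rw [abs_mul, abs_of_nonneg (hp0 xy)]
  have hplZsum : ∑' xy : 𝒳 × 𝒴, p xy * Real.log (Z xy.2)
      = ∑' y, pY y * Real.log (Z y) := by
    rw [tsum_swap_eq _ hplZ]
    refine tsum_congr fun y => ?_
    rw [hpY y, ← tsum_mul_right]
  -- main case split on discreteMI
  unfold discreteMI
  split_ifs with hL
  · rw [EReal.coe_le_coe_iff]
    -- pointwise inequality
    have key : ∀ xy : 𝒳 × 𝒴, p xy - q xy ≤
        p xy * Real.log (p xy / (pX xy.1 * pY xy.2)) - p xy * f xy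
          + p xy * Real.log (Z xy.2) := by
      intro xy
      rcases lt_or_eq_of_le (hp0 xy) with h | h
      · obtain ⟨x, y⟩ := xy
        have hx : 0 < pX x := hposX x y h
        have hy : 0 < pY y := hposY x y h
        have hz : 0 < Z y := hposZ x y h
        have hqpos : 0 < q (x, y) :=
          mul_pos (div_pos hy hz) (mul_pos hx (Real.exp_pos _))
        have hlog : Real.log (q (x, y) / p (x, y)) ≤ q (x, y) / p (x, y) - 1 :=
          Real.log_le_sub_one_of_pos (div_pos hqpos h)
        have hexpand : Real.log (q (x, y) / p (x, y)) =
            Real.log (pY y) - Real.log (Z y) + Real.log (pX x) + f (x, y)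
              - Real.log (p (x, y)) := by
          rw [Real.log_div hqpos.ne' h.ne', hqdef]
          rw [Real.log_mul (div_pos hy hz).ne' (mul_pos hx (Real.exp_pos _)).ne',
            Real.log_div hy.ne' hz.ne', Real.log_mul hx.ne' (Real.exp_pos _).ne',
            Real.log_exp]
          ring
        have hexpand2 : Real.log (p (x, y) / (pX x * pY y)) =
            Real.log (p (x, y)) - Real.log (pX x) - Real.log (pY y) := by
          rw [Real.log_div h.ne' (mul_pos hx hy).ne', Real.log_mul hx.ne' hy.ne']
          ring
        have hmul : p (x, y) * Real.log (q (x, y) / p (x, y))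
            ≤ q (x, y) - p (x, y) := by
          have := mul_le_mul_of_nonneg_left hlog (hp0 (x, y))
          calc p (x, y) * Real.log (q (x, y) / p (x, y))
              ≤ p (x, y) * (q (x, y) / p (x, y) - 1) := this
            _ = q (x, y) - p (x, y) := by field_simp
        rw [hexpand] at hmul
        rw [hexpand2]
        nlinarith [hmul]
      · simp [← h, hq0 xy]
    -- sum the pointwise inequality
    have hRHSsum : Summable fun xy : 𝒳 × 𝒴 =>
        p xy * Real.log (p xy / (pX xy.1 * pY xy.2)) - p xy * f xy
          + p xy * Real.log (Z xy.2) := (hL.sub hpf).add hplZ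
    have hsum_le := Summable.tsum_le_tsum key (hps.sub hqs) hRHSsum
    rw [Summable.tsum_sub hps hqs, hp1, hqsum1, sub_self] at hsum_le
    rw [Summable.tsum_add (hL.sub hpf) hplZ, Summable.tsum_sub hL hpf, hplZsum] at hsum_le
    linarith
  · exact le_top
end

section
/- Let 𝒳 and 𝒴 be countable sets, let X, Y be random variables with joint probability mass function p(x,y) and marginals p(x), p(y), and let Z_1, …, Z_K be i.i.d. random variables with law p(x), independent of (X,Y). Fix α ∈ [0,1], a critic function f : 𝒳 × 𝒴 → ℝ, and a function q : 𝒴 → ℝ with q(y) > 0 for all y, and define the Monte-Carlo partition estimate m(y; x, z_{1:K}) = (1/(K+1)) (e^{f(x,y)} + Σ_{k=1}^{K} e^{f(z_k,y)}). Then, under integrability of all expectations below, the mutual information satisfies the interpolated lower bound I(X;Y) ≥ 1 + E_{(X,Y,Z_{1:K})} [ log ( e^{f(X,Y)} / (α·m(Y; X, Z_{1:K}) + (1−α)·q(Y)) ) ] − E_{(X,Z_{1:K}) ⊥ Y'} [ e^{f(X,Y')} / (α·m(Y'; X, Z_{1:K}) + (1−α)·q(Y')) ], where in the second expectation Y' has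 law p(y) and is independent of (X, Z_{1:K}); the right-hand side is the MI-α objective I_α. -/
open scoped BigOperators

lemma key_ineq (a b u : ℝ) (ha : 0 ≤ a) (hb : 0 ≤ b) (hab : a ≠ 0 → 0 < b) :
    a * u - b * Real.exp u ≤ a * Real.log (a / b) - a := by
  rcases ha.eq_or_lt with h | h
  · have h0 : 0 ≤ b * Real.exp u := by positivity
    simp only [← h, zero_mul, zero_sub, sub_zero]
    linarith
  · have hb' : 0 < b := hab h.ne'
    set L := Real.log (a / b) with hL
    have h1 : u - L + 1 ≤ Real.exp (u - L) := Real.add_one_le_exp _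
    have h2 : Real.exp (u - L) = b * Real.exp u / a := by
      rw [hL, Real.exp_sub, Real.exp_log (div_pos h hb')]
      field_simp
    rw [h2] at h1
    have h3 := mul_le_mul_of_nonneg_left h1 h.le
    have h4 : a * (b * Real.exp u / a) = b * Real.exp u := by field_simp
    rw [h4] at h3
    nlinarith

lemma pi_prod_summable_tsum {𝒳 : Type*} [Countable 𝒳] (w : 𝒳 → ℝ)
    (hw : Summable w) (hw0 : ∀ x, 0 ≤ w x) (n : ℕ) :
    Summable (fun z : Fin n → 𝒳 => ∏ k, w (z k)) ∧
      ∑' z : Fin n → 𝒳, ∏ k, w (z k) = (∑' x, w x) ^ n := by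
  induction n with
  | zero =>
    constructor
    · exact Summable.of_finite
    · simp [tsum_fintype]
  | succ n ih =>
    have hcomp : ∀ t : 𝒳 × (Fin n → 𝒳),
        (∏ k : Fin (n+1), w ((Fin.consEquiv (fun _ => 𝒳)) t k))
          = w t.1 * ∏ k : Fin n, w (t.2 k) := by
      rintro ⟨a, z⟩
      have h0 : (Fin.consEquiv (fun _ : Fin (n+1) => 𝒳)) (a, z) = Fin.cons a z := rfl
      rw [h0, Fin.prod_univ_succ]
      simp
    have hsum2 : Summable (fun t : 𝒳 × (Fin n → 𝒳) => w t.1 * ∏ k : Fin n, w (t.2 k)) :=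
      Summable.mul_of_nonneg (f := w) (g := fun z : Fin n → 𝒳 => ∏ k, w (z k)) hw ih.1
        (Pi.le_def.mpr hw0) (Pi.le_def.mpr fun _ => Finset.prod_nonneg fun _ _ => hw0 _)
    have hsum : Summable (fun z : Fin (n+1) → 𝒳 => ∏ k, w (z k)) := by
      refine (Equiv.summable_iff (f := fun z : Fin (n+1) → 𝒳 => ∏ k, w (z k))
        (Fin.consEquiv (fun _ => 𝒳))).mp ?_
      exact hsum2.congr fun t => (hcomp t).symm
    refine ⟨hsum, ?_⟩
    have h1 : ∑' z : Fin (n+1) → 𝒳, ∏ k, w (z k)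
        = ∑' t : 𝒳 × (Fin n → 𝒳), w t.1 * ∏ k : Fin n, w (t.2 k) := by
      rw [← Equiv.tsum_eq (f := fun z : Fin (n+1) → 𝒳 => ∏ k, w (z k))
        (Fin.consEquiv (fun _ => 𝒳))]
      exact tsum_congr hcomp
    rw [h1, Summable.tsum_prod' hsum2 (fun a => (ih.1.mul_left (w a)))]
    simp_rw [tsum_mul_left]
    rw [tsum_mul_right, ih.2]
    ring

lemma prod3_summable_tsum {𝒳 𝒴 Z : Type*} (F : 𝒳 × 𝒴 → ℝ) (C : Z → ℝ)
    (hF : Summable F) (hC : Summable C) (hC0 : ∀ z, 0 ≤ C z) :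
    Summable (fun t : 𝒳 × 𝒴 × Z => F (t.1, t.2.1) * C t.2.2) ∧
      ∑' t : 𝒳 × 𝒴 × Z, F (t.1, t.2.1) * C t.2.2 = (∑' a, F a) * (∑' z, C z) := by
  have habs : Summable (fun s : (𝒳 × 𝒴) × Z => |F s.1| * C s.2) :=
    Summable.mul_of_nonneg (f := fun a => |F a|) (g := C) hF.abs hC
      (Pi.le_def.mpr fun a => abs_nonneg _) (Pi.le_def.mpr hC0)
  have hs : Summable (fun s : (𝒳 × 𝒴) × Z => F s.1 * C s.2) := by
    refine summable_abs_iff.mp (habs.congr fun s => ?_)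
    rw [abs_mul, abs_of_nonneg (hC0 _)]
  have hT : Summable (fun t : 𝒳 × 𝒴 × Z => F (t.1, t.2.1) * C t.2.2) := by
    refine (Equiv.summable_iff (f := fun t : 𝒳 × 𝒴 × Z => F (t.1, t.2.1) * C t.2.2)
      (Equiv.prodAssoc 𝒳 𝒴 Z)).mp ?_
    exact hs
  refine ⟨hT, ?_⟩
  have h1 : ∑' t : 𝒳 × 𝒴 × Z, F (t.1, t.2.1) * C t.2.2
      = ∑' s : (𝒳 × 𝒴) × Z, F s.1 * C s.2 := by
    rw [← Equiv.tsum_eq (f := fun t : 𝒳 × 𝒴 × Z => F (t.1, t.2.1) * C t.2.2)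
      (Equiv.prodAssoc 𝒳 𝒴 Z)]
    exact tsum_congr fun s => rfl
  rw [h1, Summable.tsum_prod' hs (fun a => hC.mul_left (F a))]
  simp_rw [tsum_mul_left]
  rw [tsum_mul_right]

/-- **Interpolated multisample (MI-α) lower bound on mutual information.**
Let `X, Y` be discrete random variables with joint pmf `p` and marginals `pX`, `pY`,
and let `Z_1, …, Z_K` be i.i.d. with law `pX`, independent of `(X, Y)` (so that the
joint weight of `(x, y, z_{1:K})` is `p (x, y) * ∏ k, pX (z k)`). Fix `α ∈ [0,1]`,
a critic `f : 𝒳 → 𝒴 → ℝ` and a baseline `q : 𝒴 → ℝ` with `q y > 0`, and let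
`m y x z = (e^{f x y} + Σ_k e^{f (z k) y}) / (K+1)` be the Monte-Carlo partition
estimate.  Then, provided both expectations below are absolutely convergent,
`I(X;Y) ≥ 1 + E_{(X,Y,Z)}[log (e^{f(X,Y)} / (α m(Y;X,Z) + (1-α) q(Y)))]
        - E_{(X,Z) ⟂ Y'}[e^{f(X,Y')} / (α m(Y';X,Z) + (1-α) q(Y'))]`,
where `Y'` has law `pY` and is independent of `(X, Z_{1:K})`. -/
theorem mutualInfo_ge_interpolated_bound {𝒳 𝒴 : Type*} [Countable 𝒳] [Countable 𝒴]
    (p : 𝒳 × 𝒴 → ℝ) (pX : 𝒳 → ℝ) (pY : 𝒴 → ℝ) (K : ℕ) (α : ℝ)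
    (f : 𝒳 → 𝒴 → ℝ) (q : 𝒴 → ℝ) (m : 𝒴 → 𝒳 → (Fin K → 𝒳) → ℝ)
    (hp0 : ∀ xy, 0 ≤ p xy) (hp1 : ∑' xy : 𝒳 × 𝒴, p xy = 1)
    (hpX : ∀ x, pX x = ∑' y, p (x, y)) (hpY : ∀ y, pY y = ∑' x, p (x, y))
    (hα : α ∈ Set.Icc (0 : ℝ) 1) (hq : ∀ y, 0 < q y)
    (hm : ∀ y x z, m y x z
      = (Real.exp (f x y) + ∑ k : Fin K, Real.exp (f (z k) y)) / (K + 1))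
    -- absolute convergence of the first expectation, over `(X, Y, Z_{1:K})`
    (h₁ : Summable (fun t : 𝒳 × 𝒴 × (Fin K → 𝒳) =>
      |p (t.1, t.2.1) * (∏ k : Fin K, pX (t.2.2 k))
        * Real.log (Real.exp (f t.1 t.2.1)
            / (α * m t.2.1 t.1 t.2.2 + (1 - α) * q t.2.1))|))
    -- absolute convergence of the second expectation, over `(X, Z_{1:K})`
    -- independent of `Y'`
    (h₂ : Summable (fun t : 𝒳 × 𝒴 × (Fin K → 𝒳) =>
      |pX t.1 * pY t.2.1 * (∏ k : Fin K, pX (t.2.2 k))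
        * (Real.exp (f t.1 t.2.1)
            / (α * m t.2.1 t.1 t.2.2 + (1 - α) * q t.2.1))|)) :
    ((1 + (∑' t : 𝒳 × 𝒴 × (Fin K → 𝒳),
          p (t.1, t.2.1) * (∏ k : Fin K, pX (t.2.2 k))
            * Real.log (Real.exp (f t.1 t.2.1)
                / (α * m t.2.1 t.1 t.2.2 + (1 - α) * q t.2.1)))
        - (∑' t : 𝒳 × 𝒴 × (Fin K → 𝒳),
          pX t.1 * pY t.2.1 * (∏ k : Fin K, pX (t.2.2 k))
            * (Real.exp (f t.1 t.2.1)
                / (α * m t.2.1 t.1 t.2.2 + (1 - α) * q t.2.1))) : ℝ) : EReal)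
      ≤ discreteMI p pX pY := by

  obtain ⟨hα0, hα1⟩ := hα
  have hsp : Summable p := by
    by_contra h
    rw [tsum_eq_zero_of_not_summable h] at hp1
    norm_num at hp1
  have hslice_x : ∀ x, Summable (fun y => p (x, y)) := fun x => hsp.prod_factor x
  have hslice_y : ∀ y, Summable (fun x => p (x, y)) := by
    intro y
    have hinj : Function.Injective (fun x : 𝒳 => ((x, y) : 𝒳 × 𝒴)) :=
      fun a b h => (Prod.ext_iff.mp h).1
    exact hsp.comp_injective hinj
  have hpX0 : ∀ x, 0 ≤ pX x := fun x => by
    rw [hpX x]; exact tsum_nonneg fun y => hp0 _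
  have hpY0 : ∀ y, 0 ≤ pY y := fun y => by
    rw [hpY y]; exact tsum_nonneg fun x => hp0 _
  have hpXle : ∀ x y, p (x, y) ≤ pX x := fun x y => by
    rw [hpX x]; exact Summable.le_tsum (hslice_x x) y fun j _ => hp0 _
  have hpYle : ∀ x y, p (x, y) ≤ pY y := fun x y => by
    rw [hpY y]; exact Summable.le_tsum (hslice_y y) x fun j _ => hp0 _
  have hasX : HasSum pX 1 := by
    have h0 : HasSum p 1 := hp1 ▸ hsp.hasSum
    exact h0.prod_fiberwise fun x => (hpX x) ▸ (hslice_x x).hasSum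
  have hpXs : Summable pX := hasX.summable
  have htpX : ∑' x, pX x = 1 := hasX.tsum_eq
  have hc0 : ∀ z : Fin K → 𝒳, 0 ≤ ∏ k, pX (z k) :=
    fun z => Finset.prod_nonneg fun k _ => hpX0 _
  obtain ⟨hcsum, hctsum⟩ := pi_prod_summable_tsum pX hpXs hpX0 K
  rw [htpX, one_pow] at hctsum
  have hmpos : ∀ y x z, 0 < m y x z := by
    intro y x z
    rw [hm]
    have h1 : 0 < Real.exp (f x y) := Real.exp_pos _
    have h2 : 0 ≤ ∑ k : Fin K, Real.exp (f (z k) y) :=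
      Finset.sum_nonneg fun k _ => (Real.exp_pos _).le
    positivity
  have hD : ∀ (y : 𝒴) (x : 𝒳) (z : Fin K → 𝒳), 0 < α * m y x z + (1 - α) * q y := by
    intro y x z
    rcases hα0.eq_or_lt with h | h
    · rw [← h]; simpa using hq y
    · exact add_pos_of_pos_of_nonneg (mul_pos h (hmpos y x z))
        (mul_nonneg (by linarith) (hq y).le)
  have hE : ∀ (y : 𝒴) (x : 𝒳) (z : Fin K → 𝒳),
      0 < Real.exp (f x y) / (α * m y x z + (1 - α) * q y) :=
    fun y x z => div_pos (Real.exp_pos _) (hD y x z)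
  have S1 : Summable (fun t : 𝒳 × 𝒴 × (Fin K → 𝒳) =>
      p (t.1, t.2.1) * (∏ k : Fin K, pX (t.2.2 k))
        * Real.log (Real.exp (f t.1 t.2.1)
            / (α * m t.2.1 t.1 t.2.2 + (1 - α) * q t.2.1))) := summable_abs_iff.mp h₁
  have S2 : Summable (fun t : 𝒳 × 𝒴 × (Fin K → 𝒳) =>
      pX t.1 * pY t.2.1 * (∏ k : Fin K, pX (t.2.2 k))
        * (Real.exp (f t.1 t.2.1)
            / (α * m t.2.1 t.1 t.2.2 + (1 - α) * q t.2.1))) := summable_abs_iff.mp h₂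
  by_cases hKL : Summable (fun xy : 𝒳 × 𝒴 => p xy * Real.log (p xy / (pX xy.1 * pY xy.2)))
  · unfold discreteMI
    rw [if_pos hKL, EReal.coe_le_coe_iff]
    obtain ⟨hKLT, hKLTe⟩ := prod3_summable_tsum
      (fun xy : 𝒳 × 𝒴 => p xy * Real.log (p xy / (pX xy.1 * pY xy.2)))
      (fun z : Fin K → 𝒳 => ∏ k, pX (z k)) hKL hcsum hc0
    obtain ⟨hPT, hPTe⟩ := prod3_summable_tsum p (fun z : Fin K → 𝒳 => ∏ k, pX (z k))
      hsp hcsum hc0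
    rw [hctsum, mul_one] at hKLTe hPTe
    rw [hp1] at hPTe
    have hpt : ∀ t : 𝒳 × 𝒴 × (Fin K → 𝒳),
        p (t.1, t.2.1) * (∏ k : Fin K, pX (t.2.2 k))
            * Real.log (Real.exp (f t.1 t.2.1)
                / (α * m t.2.1 t.1 t.2.2 + (1 - α) * q t.2.1))
          - pX t.1 * pY t.2.1 * (∏ k : Fin K, pX (t.2.2 k))
            * (Real.exp (f t.1 t.2.1)
                / (α * m t.2.1 t.1 t.2.2 + (1 - α) * q t.2.1))
        ≤ (p (t.1, t.2.1) * Real.log (p (t.1, t.2.1) / (pX t.1 * pY t.2.1)))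
              * (∏ k : Fin K, pX (t.2.2 k))
          - p (t.1, t.2.1) * (∏ k : Fin K, pX (t.2.2 k)) := by
      rintro ⟨x, y, z⟩
      dsimp only
      have hc : (0:ℝ) ≤ ∏ k : Fin K, pX (z k) := hc0 z
      set c := ∏ k : Fin K, pX (z k) with hcdef
      have hEpos : 0 < Real.exp (f x y) / (α * m y x z + (1 - α) * q y) := hE y x z
      set E := Real.exp (f x y) / (α * m y x z + (1 - α) * q y) with hEdef
      have ha : 0 ≤ p (x, y) * c := mul_nonneg (hp0 _) hc
      have hb : 0 ≤ pX x * pY y * c := mul_nonneg (mul_nonneg (hpX0 x) (hpY0 y)) hc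
      have hab : p (x, y) * c ≠ 0 → 0 < pX x * pY y * c := by
        intro hne
        have hp' : p (x, y) ≠ 0 := fun h => hne (by rw [h, zero_mul])
        have hc' : c ≠ 0 := fun h => hne (by rw [h, mul_zero])
        have hp'' : 0 < p (x, y) := (hp0 _).lt_of_ne (Ne.symm hp')
        exact mul_pos (mul_pos (hp''.trans_le (hpXle x y)) (hp''.trans_le (hpYle x y)))
          (hc.lt_of_ne (Ne.symm hc'))
      have hkey := key_ineq (p (x, y) * c) (pX x * pY y * c) (Real.log E) ha hb hab
      rw [Real.exp_log hEpos] at hkey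
      have hlog : (p (x, y) * c) * Real.log ((p (x, y) * c) / (pX x * pY y * c))
          = (p (x, y) * Real.log (p (x, y) / (pX x * pY y))) * c := by
        rcases hc.eq_or_lt with h | h
        · simp [← h]
        · rw [mul_div_mul_right _ _ h.ne']
          ring
      rw [hlog] at hkey
      calc p (x, y) * c * Real.log E - pX x * pY y * c * E
          = (p (x, y) * c) * Real.log E - (pX x * pY y * c) * E := by ring
        _ ≤ _ := hkey
    have hineq := Summable.tsum_le_tsum hpt (S1.sub S2) (hKLT.sub hPT)
    rw [Summable.tsum_sub S1 S2, Summable.tsum_sub hKLT hPT, hKLTe, hPTe] at hineq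
    linarith
  · unfold discreteMI
    rw [if_neg hKL]
    exact le_top
end
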